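/- In the octonion algebra, for elements h_0, h_1, ..., h_k, the left-nested product (h_0(h_1(...(h_{k-1}h_k)...))) multiplied by the reverse-nested product of inverses ((...(h_k^{-1} h_{k-1}^{-1}) ... h_1^{-1}) h_0^{-1}) equals 1, provided all h_j are nonzero. Equivalently, the nested product of inverses in reverse order is the inverse of the nested product. -/

import Mathlib

/-!
The inverse `x⁻¹ = conj x / normSq x` reverses products, `(x y)⁻¹ = y⁻¹ x⁻¹`, without any
appeal to associativity: conjugation is an anti-automorphism, the norm is multiplicative, and
real scalars associate and commute with everything. By induction on `k` the reverse-nested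
product of inverses is therefore the inverse of the nested product `P`, and `P ≠ 0` because a
multiplicative norm leaves no zero divisors; so the product is `P P⁻¹ = 1`.
-/

noncomputable section

/-- The octonion algebra, realized as the Cayley–Dickson double of the quaternions. -/
structure Octonion : Type where
  a : Quaternion ℝ
  b : Quaternion ℝ

namespace Octonion

instance : Zero Octonion := ⟨⟨0, 0⟩⟩
instance : One Octonion := ⟨⟨1, 0⟩⟩
instance : Add Octonion := ⟨fun x y => ⟨x.a + y.a, x.b + y.b⟩⟩
instance : Neg Octonion := ⟨fun x => ⟨-x.a, -x.b⟩⟩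
instance : Sub Octonion := ⟨fun x y => ⟨x.a - y.a, x.b - y.b⟩⟩
/-- Cayley–Dickson multiplication. -/
instance : Mul Octonion :=
  ⟨fun x y => ⟨x.a * y.a - star y.b * x.b, y.b * x.a + x.b * star y.a⟩⟩

/-- Octonion conjugation. -/
def conj (x : Octonion) : Octonion := ⟨star x.a, -x.b⟩

/-- The real part of an octonion. -/
def re (x : Octonion) : ℝ := x.a.re

/-- The canonical embedding of the reals into the octonions. -/
def ofReal (r : ℝ) : Octonion := ⟨(r : Quaternion ℝ), 0⟩

/-- The squared Euclidean norm of an octonion. -/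
def normSq (x : Octonion) : ℝ := Quaternion.normSq x.a + Quaternion.normSq x.b

instance : Inv Octonion := ⟨fun x => ofReal (normSq x)⁻¹ * conj x⟩

/-- The standard basis units `i_0 = 1, i_1, …, i_7` (indexed by a natural number). -/
def unitN : ℕ → Octonion
  | 1 => ⟨⟨0, 1, 0, 0⟩, 0⟩
  | 2 => ⟨⟨0, 0, 1, 0⟩, 0⟩
  | 3 => ⟨⟨0, 0, 0, 1⟩, 0⟩
  | 4 => ⟨0, ⟨1, 0, 0, 0⟩⟩
  | 5 => ⟨0, ⟨0, 1, 0, 0⟩⟩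
  | 6 => ⟨0, ⟨0, 0, 1, 0⟩⟩
  | 7 => ⟨0, ⟨0, 0, 0, 1⟩⟩
  | _ => ⟨⟨1, 0, 0, 0⟩, 0⟩

/-- The standard basis units of the octonions. -/
def unit (j : Fin 8) : Octonion := unitN j

/-- The real coordinates of an octonion in the standard basis. -/
def coord (x : Octonion) : Fin 8 → ℝ
  | 0 => x.a.re
  | 1 => x.a.imI
  | 2 => x.a.imJ
  | 3 => x.a.imK
  | 4 => x.b.re
  | 5 => x.b.imI
  | 6 => x.b.imJ
  | 7 => x.b.imK

/-- The octonion exponential, `exp (a + v) = e^a (cos |v| + (v/|v|) sin |v|)`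
for `a` real and `v` purely imaginary. -/
def exp (x : Octonion) : Octonion :=
  ofReal (Real.exp (re x)) *
    (ofReal (Real.cos (Real.sqrt (normSq (x - ofReal (re x))))) +
      ofReal (Real.sin (Real.sqrt (normSq (x - ofReal (re x)))) /
          Real.sqrt (normSq (x - ofReal (re x)))) *
        (x - ofReal (re x)))

end Octonion

/-- The left-nested product `h₀ (h₁ (⋯ (h_{k-1} h_k) ⋯))`. -/
def nestProd : {n : ℕ} → (Fin (n + 1) → Octonion) → Octonion
  | 0, h => h 0
  | _ + 1, h => h 0 * nestProd (fun i => h i.succ)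

/-- The reverse-nested product of inverses `((⋯ (h_k⁻¹ h_{k-1}⁻¹) ⋯ h₁⁻¹) h₀⁻¹)`. -/
def nestProdRevInv : {n : ℕ} → (Fin (n + 1) → Octonion) → Octonion
  | 0, h => (h 0)⁻¹
  | _ + 1, h => nestProdRevInv (fun i => h i.succ) * (h 0)⁻¹

namespace Octonion

@[ext]
theorem ext : ∀ {x y : Octonion}, x.a = y.a → x.b = y.b → x = y
  | ⟨_, _⟩, ⟨_, _⟩, rfl, rfl => rfl

@[simp] theorem mul_a (x y : Octonion) : (x * y).a = x.a * y.a - star y.b * x.b := rfl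
@[simp] theorem mul_b (x y : Octonion) : (x * y).b = y.b * x.a + x.b * star y.a := rfl
@[simp] theorem conj_a (x : Octonion) : (conj x).a = star x.a := rfl
@[simp] theorem conj_b (x : Octonion) : (conj x).b = -x.b := rfl
@[simp] theorem ofReal_a (r : ℝ) : (ofReal r).a = (r : Quaternion ℝ) := rfl
@[simp] theorem ofReal_b (r : ℝ) : (ofReal r).b = 0 := rfl
@[simp] theorem one_a : (1 : Octonion).a = 1 := rfl
@[simp] theorem one_b : (1 : Octonion).b = 0 := rfl
@[simp] theorem zero_a : (0 : Octonion).a = 0 := rfl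
@[simp] theorem zero_b : (0 : Octonion).b = 0 := rfl

theorem inv_def (x : Octonion) : x⁻¹ = ofReal (normSq x)⁻¹ * conj x := rfl

theorem ofReal_one : ofReal 1 = 1 := by
  ext <;> simp

theorem ofReal_mul_ofReal (r s : ℝ) : ofReal r * ofReal s = ofReal (r * s) := by
  ext <;> simp

theorem ofReal_mul_assoc (r : ℝ) (x y : Octonion) : ofReal r * x * y = ofReal r * (x * y) := by
  ext <;> simp <;> ring

theorem mul_ofReal_mul_comm (r : ℝ) (x y : Octonion) :
    x * (ofReal r * y) = ofReal r * (x * y) := by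
  ext <;> simp <;> ring

theorem conj_mul (x y : Octonion) : conj (x * y) = conj y * conj x := by
  ext1 <;> simp

theorem mul_conj_self (x : Octonion) : x * conj x = ofReal (normSq x) := by
  ext1 <;> simp [normSq, Quaternion.self_mul_star, Quaternion.star_mul_self]

/-- Degen's eight-square identity. -/
theorem normSq_mul (x y : Octonion) : normSq (x * y) = normSq x * normSq y := by
  simp only [normSq, mul_a, Quaternion.normSq_def', Quaternion.re_sub, Quaternion.re_mul,
    Quaternion.re_star, Quaternion.imI_star, neg_mul, sub_neg_eq_add, Quaternion.imJ_star,
    Quaternion.imK_star, Quaternion.imI_sub, Quaternion.imI_mul, Quaternion.imJ_sub,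
    Quaternion.imJ_mul, Quaternion.imK_sub, Quaternion.imK_mul, mul_b, Quaternion.re_add, mul_neg,
    Quaternion.imI_add, Quaternion.imJ_add, Quaternion.imK_add]
  ring

theorem normSq_eq_zero {x : Octonion} : normSq x = 0 ↔ x = 0 := by
  refine ⟨fun hx => ?_, fun hx => by simp [hx, normSq]⟩
  have ha := Quaternion.normSq_nonneg (a := x.a)
  have hb := Quaternion.normSq_nonneg (a := x.b)
  rw [normSq] at hx
  exact Octonion.ext (Quaternion.normSq_eq_zero.mp (by linarith))
    (Quaternion.normSq_eq_zero.mp (by linarith))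

theorem mul_ne_zero {x y : Octonion} (hx : x ≠ 0) (hy : y ≠ 0) : x * y ≠ 0 := by
  rw [Ne, ← normSq_eq_zero, normSq_mul]
  exact _root_.mul_ne_zero (mt normSq_eq_zero.mp hx) (mt normSq_eq_zero.mp hy)

theorem mul_inv_cancel {x : Octonion} (hx : x ≠ 0) : x * x⁻¹ = 1 := by
  rw [inv_def, mul_ofReal_mul_comm, mul_conj_self, ofReal_mul_ofReal,
    inv_mul_cancel₀ (mt normSq_eq_zero.mp hx), ofReal_one]

theorem mul_inv_rev (x y : Octonion) : (x * y)⁻¹ = y⁻¹ * x⁻¹ := by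
  rw [inv_def, inv_def, inv_def, conj_mul, normSq_mul, ofReal_mul_assoc, mul_ofReal_mul_comm,
    ← ofReal_mul_assoc _ (ofReal _), ofReal_mul_ofReal, _root_.mul_inv, mul_comm (normSq x)⁻¹]

end Octonion

theorem nestProdRevInv_eq_inv_nestProd {k : ℕ} (h : Fin (k + 1) → Octonion) :
    nestProdRevInv h = (nestProd h)⁻¹ := by
  induction k with
  | zero => rfl
  | succ k ih => rw [nestProdRevInv, nestProd, ih, Octonion.mul_inv_rev]

theorem nestProd_ne_zero {k : ℕ} {h : Fin (k + 1) → Octonion} (hne : ∀ j, h j ≠ 0) :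
    nestProd h ≠ 0 := by
  induction k with
  | zero => exact hne 0
  | succ k ih => exact Octonion.mul_ne_zero (hne 0) (ih fun j => hne j.succ)

/-- In the octonions, for nonzero `h₀, …, h_k`, the nested product times the reverse-nested
product of the inverses equals `1`. -/
theorem octonion_nestProd_mul_nestProdRevInv {k : ℕ} (h : Fin (k + 1) → Octonion)
    (hne : ∀ j, h j ≠ 0) :
    nestProd h * nestProdRevInv h = 1 := by
  rw [nestProdRevInv_eq_inv_nestProd, Octonion.mul_inv_cancel (nestProd_ne_zero hne)]
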